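/- arXiv:2208.04845 — 2 statements merged into one kernel-verified Lean document; each statement's English description precedes it below -/
import Mathlib

section
/- Let r ≥ 1. For x ∈ ℝ with |x| ≤ r, let P_x denote the distribution of the ternary quantizer output: P_x({r·sign(x)}) = |x|/r and P_x({0}) = 1 - |x|/r (with the remaining level having probability 0). Then for all x, y with |x| ≤ r, |y| ≤ r, and |x - y| ≤ 1, and all subsets S of {-r, 0, r}, we have |P_x(S) - P_y(S)| ≤ 1/r. That is, the ternary quantizer is (0, 1/r)-differentially private. -/
/-!
Each output probability is a `1 / r`-Lipschitz function of the input, so the probability of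
each single level changes by at most `|x - y| / r ≤ 1 / r`. Since both distributions have total
mass `1`, a set of levels and its complement change by the same amount, and with only three levels
one of the two has at most one element.
-/

open Finset

section FiniteDistributions

variable {ι : Type*} {f g : ι → ℝ} {c : ℝ}

theorem abs_sum_sub_sum_le_of_card_le_one {S : Finset ι} (hS : #S ≤ 1) (hc : 0 ≤ c)
    (hfg : ∀ i, |f i - g i| ≤ c) : |∑ i ∈ S, f i - ∑ i ∈ S, g i| ≤ c := by
  rw [← sum_sub_distrib]
  calc |∑ i ∈ S, (f i - g i)| ≤ ∑ i ∈ S, |f i - g i| := abs_sum_le_sum_abs _ _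
    _ ≤ #S • c := sum_le_card_nsmul _ _ _ fun i _ ↦ hfg i
    _ ≤ c := by simpa using mul_le_of_le_one_left hc (by exact_mod_cast hS)

theorem abs_sum_sub_sum_le_of_card_le_three [Fintype ι] (hι : Fintype.card ι ≤ 3)
    (hsum : ∑ i, f i = ∑ i, g i) (hc : 0 ≤ c) (hfg : ∀ i, |f i - g i| ≤ c) (S : Finset ι) :
    |∑ i ∈ S, f i - ∑ i ∈ S, g i| ≤ c := by
  classical
  have hcompl (h : ι → ℝ) : ∑ i ∈ S, h i = ∑ i, h i - ∑ i ∈ Sᶜ, h i :=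
    eq_sub_of_add_eq (sum_add_sum_compl S h)
  rcases le_or_gt #S 1 with hS | hS
  · exact abs_sum_sub_sum_le_of_card_le_one hS hc hfg
  · have hSc : #Sᶜ ≤ 1 := by rw [card_compl]; omega
    rw [hcompl f, hcompl g, hsum, sub_sub_sub_cancel_left, abs_sub_comm]
    exact abs_sum_sub_sum_le_of_card_le_one hSc hc hfg

end FiniteDistributions

/-- Output distribution of the ternary quantizer, with the levels `-r, 0, r` indexed by `Fin 3`. -/
noncomputable def ternaryQuantizerProb (r x : ℝ) : Fin 3 → ℝ :=
  ![max (-x) 0 / r, 1 - |x| / r, max x 0 / r]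

theorem sum_ternaryQuantizerProb {r : ℝ} (hr : r ≠ 0) (x : ℝ) :
    ∑ q, ternaryQuantizerProb r x q = 1 := by
  have hparts : max (-x) 0 + max x 0 = |x| := by
    rw [add_comm]; exact posPart_add_negPart x
  simp only [Fin.sum_univ_three, ternaryQuantizerProb, Matrix.cons_val]
  field_simp
  linarith

theorem abs_ternaryQuantizerProb_sub_le {r : ℝ} (hr : 0 ≤ r) (x y : ℝ) (q : Fin 3) :
    |ternaryQuantizerProb r x q - ternaryQuantizerProb r y q| ≤ |x - y| / r := by
  fin_cases q <;>
    simp only [ternaryQuantizerProb, Fin.zero_eta, Fin.mk_one, Fin.reduceFinMk, Matrix.cons_val,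
      sub_sub_sub_cancel_left, ← sub_div, abs_div, abs_of_nonneg hr] <;>
    refine div_le_div_of_nonneg_right ?_ hr
  · exact (abs_max_sub_max_le_abs (-x) (-y) 0).trans_eq (by rw [neg_sub_neg, abs_sub_comm])
  · exact (abs_abs_sub_abs_le_abs_sub y x).trans_eq (abs_sub_comm y x)
  · exact abs_max_sub_max_le_abs x y 0

theorem ternary_quantizer_differential_privacy_general
    (r : ℝ) (hr : 1 ≤ r)
    (p : ℝ → Fin 3 → ℝ)
    (hp : ∀ x, p x 0 = max (-x) 0 / r ∧ p x 1 = 1 - |x| / r ∧ p x 2 = max x 0 / r)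
    (x y : ℝ) (hxy : |x - y| ≤ 1)
    (S : Finset (Fin 3)) :
    |(∑ q ∈ S, p x q) - (∑ q ∈ S, p y q)| ≤ 1 / r := by
  have hr0 : 0 < r := zero_lt_one.trans_le hr
  have hp_eq : ∀ z, p z = ternaryQuantizerProb r z := fun z ↦ by
    funext q
    fin_cases q <;> simp [ternaryQuantizerProb, hp z]
  rw [hp_eq, hp_eq]
  refine abs_sum_sub_sum_le_of_card_le_three (by simp) ?_ (by positivity) (fun q ↦ ?_) S
  · rw [sum_ternaryQuantizerProb hr0.ne', sum_ternaryQuantizerProb hr0.ne']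
  · calc _ ≤ |x - y| / r := abs_ternaryQuantizerProb_sub_le hr0.le x y q
      _ ≤ 1 / r := by gcongr

/-- `(0, 1/r)`-differential privacy of the ternary quantizer. The three output
levels `-r, 0, r` are indexed by `Fin 3` via `lev 0 = -r`, `lev 1 = 0`,
`lev 2 = r`, and the output distribution on input `x` with `|x| ≤ r` is
`p x 0 = max (-x) 0 / r`, `p x 1 = 1 - |x|/r`, `p x 2 = max x 0 / r`
(i.e. probability `|x|/r` on level `r * sign x` and `1 - |x|/r` on `0`).
For all inputs `x, y` with `|x - y| ≤ 1` and every subset `S` of the levels,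
the output probabilities differ by at most `1/r`. -/
theorem ternary_quantizer_differential_privacy
    (r : ℝ) (hr : 1 ≤ r)
    (p : ℝ → Fin 3 → ℝ)
    (hp : ∀ x, p x 0 = max (-x) 0 / r ∧ p x 1 = 1 - |x| / r ∧ p x 2 = max x 0 / r)
    (x y : ℝ) (hx : |x| ≤ r) (hy : |y| ≤ r) (hxy : |x - y| ≤ 1)
    (S : Finset (Fin 3)) :
    |(∑ q ∈ S, p x q) - (∑ q ∈ S, p y q)| ≤ 1 / r :=
  ternary_quantizer_differential_privacy_general r hr p hp x y hxy S
end

section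
/- Let {v^k} be a nonnegative real sequence satisfying v^{k+1} ≤ (1 - r₁^k) v^k + r₂^k for all k ≥ 0, where C₁/(C₃k+1)^{γ₁} ≤ r₁^k ≤ 1 and 0 ≤ r₂^k ≤ C₂/(C₃k+1)^{γ₂} for constants C₁, C₂, C₃ > 0, 0 ≤ γ₁ < 1, and γ₁ < γ₂. Then for every 0 ≤ γ₀ < γ₂ − γ₁, lim_{k→∞} (k+1)^{γ₀} v^k = 0. -/
/-!
Fix `γ` with `γ₀ < γ < γ₂ - γ₁` and prove `v k ≤ M (k+1)^(-γ)` by induction. With `a = k + 1`,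
passing from `M a^(-γ)` to `M (a+1)^(-γ)` costs at most `γ M a^(-γ-1)` (tangent line of the
convex function `x ↦ x^(-γ)`), while the contraction `r₁ k ≥ c a^(-γ₁)` gains `c M a^(-γ-γ₁)`.
Since `γ₁ < 1`, half of this gain pays for the cost once `a` is large, and the other half pays
for the noise `r₂ k ≤ D a^(-γ₂) ≤ D a^(-γ-γ₁)` as soon as `M ≥ 2D/c`; the finitely many early
indices are absorbed by enlarging `M`.
-/

open Real Filter Topology

lemma rpow_neg_sub_le_add_one_rpow_neg {a γ : ℝ} (ha : 0 < a) (hγ : 0 ≤ γ) :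
    a ^ (-γ) - γ * a ^ (-γ - 1) ≤ (a + 1) ^ (-γ) := by
  have h_exp : rexp (-γ / a) ≤ (1 + 1 / a) ^ (-γ) := by
    calc rexp (-γ / a) = rexp (1 / a) ^ (-γ) := by rw [← Real.exp_mul]; ring_nf
      _ ≤ (1 + 1 / a) ^ (-γ) :=
        rpow_le_rpow_of_nonpos (by positivity) (by linarith [add_one_le_exp (1 / a)])
          (by linarith)
  calc a ^ (-γ) - γ * a ^ (-γ - 1) = a ^ (-γ) * (-γ / a + 1) := by
        rw [rpow_sub_one ha.ne']; ring
    _ ≤ a ^ (-γ) * (1 + 1 / a) ^ (-γ) := by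
        gcongr; exact (add_one_le_exp _).trans h_exp
    _ = (a + 1) ^ (-γ) := by
        rw [← mul_rpow ha.le (by positivity)]; field_simp

lemma one_sub_mul_add_le_mul_add_one_rpow_neg {a c D M γ γ₁ r s x : ℝ} (ha : 0 < a)
    (hγ : 0 ≤ γ) (hM : 0 ≤ M) (hDM : 2 * D ≤ c * M) (hlarge : γ * a ^ (γ₁ - 1) ≤ c / 2)
    (hr : c * a ^ (-γ₁) ≤ r) (hr_le : r ≤ 1) (hs : s ≤ D * a ^ (-(γ + γ₁)))
    (hx : x ≤ M * a ^ (-γ)) :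
    (1 - r) * x + s ≤ M * (a + 1) ^ (-γ) := by
  have hsplit : ∀ p q : ℝ, a ^ (-(p + q)) = a ^ (-p) * a ^ (-q) := fun p q => by
    rw [neg_add, rpow_add ha]
  have hx' : (1 - r) * x ≤ M * a ^ (-γ) - c * M * a ^ (-(γ + γ₁)) :=
    calc (1 - r) * x ≤ (1 - r) * (M * a ^ (-γ)) := by gcongr
      _ ≤ (1 - c * a ^ (-γ₁)) * (M * a ^ (-γ)) := by gcongr
      _ = M * a ^ (-γ) - c * M * a ^ (-(γ + γ₁)) := by rw [hsplit]; ring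
  have hs' : s ≤ c * M / 2 * a ^ (-(γ + γ₁)) := hs.trans (by gcongr; linarith)
  have hdrift : γ * a ^ (-γ - 1) ≤ c / 2 * a ^ (-(γ + γ₁)) :=
    calc γ * a ^ (-γ - 1) = γ * a ^ (γ₁ - 1) * a ^ (-(γ + γ₁)) := by
          rw [mul_assoc, ← rpow_add ha]; ring_nf
      _ ≤ c / 2 * a ^ (-(γ + γ₁)) := by gcongr
  calc (1 - r) * x + s ≤ M * (a ^ (-γ) - c / 2 * a ^ (-(γ + γ₁))) := by linarith
    _ ≤ M * (a ^ (-γ) - γ * a ^ (-γ - 1)) := by gcongr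
    _ ≤ M * (a + 1) ^ (-γ) := by gcongr; exact rpow_neg_sub_le_add_one_rpow_neg ha hγ

lemma tendsto_natCast_add_one_rpow_of_neg {p : ℝ} (hp : p < 0) :
    Tendsto (fun k : ℕ => ((k : ℝ) + 1) ^ p) atTop (𝓝 0) := by
  have h := (tendsto_rpow_neg_atTop (neg_pos.mpr hp)).comp
    (tendsto_atTop_add_const_right _ 1 tendsto_natCast_atTop_atTop)
  simpa only [neg_neg, Function.comp_def] using h

lemma exists_le_mul_add_one_rpow_neg_of_le_one_sub_mul_add {v r s : ℕ → ℝ} {c D γ γ₁ : ℝ}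
    (hc : 0 < c) (hγ : 0 ≤ γ) (hγ₁ : γ₁ < 1)
    (hr : ∀ k : ℕ, c * ((k : ℝ) + 1) ^ (-γ₁) ≤ r k) (hr_le : ∀ k, r k ≤ 1)
    (hs : ∀ k : ℕ, s k ≤ D * ((k : ℝ) + 1) ^ (-(γ + γ₁)))
    (hrec : ∀ k, v (k + 1) ≤ (1 - r k) * v k + s k) :
    ∃ M, ∀ k : ℕ, v k ≤ M * ((k : ℝ) + 1) ^ (-γ) := by
  obtain ⟨K, hK⟩ : ∃ K : ℕ, ∀ k ≥ K, γ * ((k : ℝ) + 1) ^ (γ₁ - 1) ≤ c / 2 :=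
    eventually_atTop.mp <| ((tendsto_natCast_add_one_rpow_of_neg (p := γ₁ - 1)
      (by linarith)).const_mul γ).eventually_le_const (by simpa using hc)
  obtain ⟨M₀, hM₀⟩ :=
    ((Finset.range (K + 1)).image fun j => v j * ((j : ℝ) + 1) ^ γ).exists_le
  set M := max M₀ (max 0 (2 * D / c))
  have hM : 0 ≤ M := le_max_of_le_right (le_max_left _ _)
  have hDM : 2 * D ≤ c * M := by
    rw [← div_le_iff₀' hc]; exact le_max_of_le_right (le_max_right _ _)
  have hinit : ∀ k ≤ K, v k ≤ M * ((k : ℝ) + 1) ^ (-γ) := fun k hk => by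
    have hk₀ : v k * ((k : ℝ) + 1) ^ γ ≤ M :=
      (hM₀ _ (Finset.mem_image_of_mem _ (Finset.mem_range.mpr (by omega)))).trans
        (le_max_left _ _)
    rwa [rpow_neg (by positivity), ← div_eq_mul_inv, le_div_iff₀ (by positivity)]
  refine ⟨M, fun k => ?_⟩
  induction k with
  | zero => exact hinit 0 (Nat.zero_le _)
  | succ k ih =>
    rcases le_or_gt (k + 1) K with hk | hk
    · exact hinit _ hk
    · push_cast
      exact (hrec k).trans <| one_sub_mul_add_le_mul_add_one_rpow_neg (by positivity) hγ hM hDM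
        (hK k (by omega)) (hr k) (hr_le k) (hs k) ih

lemma div_max_rpow_mul_add_one_rpow_neg_le {C a x γ : ℝ} (hC : 0 ≤ C) (ha : 0 ≤ a) (hx : 0 ≤ x)
    (hγ : 0 ≤ γ) : C / max a 1 ^ γ * (x + 1) ^ (-γ) ≤ C / (a * x + 1) ^ γ := by
  rw [rpow_neg (by positivity), ← div_eq_mul_inv, div_div,
    ← mul_rpow (by positivity) (by positivity)]
  gcongr
  nlinarith [le_max_left a 1, le_max_right a 1]

lemma div_rpow_le_div_min_rpow_mul_add_one_rpow_neg {C a x γ : ℝ} (hC : 0 ≤ C) (ha : 0 < a)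
    (hx : 0 ≤ x) (hγ : 0 ≤ γ) : C / (a * x + 1) ^ γ ≤ C / min a 1 ^ γ * (x + 1) ^ (-γ) := by
  rw [rpow_neg (by positivity), ← div_eq_mul_inv, div_div,
    ← mul_rpow (by positivity) (by positivity)]
  have hmin : 0 < min a 1 := lt_min ha one_pos
  gcongr
  nlinarith [min_le_left a 1, min_le_right a 1]

theorem polynomial_decay_general
    (v r₁ r₂ : ℕ → ℝ) (C₁ C₂ C₃ γ₁ γ₂ : ℝ)
    (hC₁ : 0 < C₁) (hC₂ : 0 < C₂) (hC₃ : 0 < C₃)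
    (hγ₁0 : 0 ≤ γ₁) (hγ₁1 : γ₁ < 1)
    (hv : ∀ k, 0 ≤ v k)
    (hr₁ : ∀ k : ℕ, C₁ / (C₃ * k + 1) ^ γ₁ ≤ r₁ k ∧ r₁ k ≤ 1)
    (hr₂ : ∀ k : ℕ, 0 ≤ r₂ k ∧ r₂ k ≤ C₂ / (C₃ * k + 1) ^ γ₂)
    (hrec : ∀ k, v (k + 1) ≤ (1 - r₁ k) * v k + r₂ k) :
    ∀ γ₀ : ℝ, 0 ≤ γ₀ → γ₀ < γ₂ - γ₁ →
      Filter.Tendsto (fun k : ℕ => ((k : ℝ) + 1) ^ γ₀ * v k)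
        Filter.atTop (nhds 0) := by
  intro γ₀ hγ₀ hγ₀₂
  obtain ⟨γ, hγ₀γ, hγγ₂⟩ : ∃ γ, γ₀ < γ ∧ γ + γ₁ < γ₂ :=
    ⟨(γ₀ + (γ₂ - γ₁)) / 2, by linarith, by linarith⟩
  have hr₁' (k : ℕ) : C₁ / max C₃ 1 ^ γ₁ * ((k : ℝ) + 1) ^ (-γ₁) ≤ r₁ k :=
    (div_max_rpow_mul_add_one_rpow_neg_le hC₁.le hC₃.le k.cast_nonneg hγ₁0).trans (hr₁ k).1
  have hr₂' (k : ℕ) : r₂ k ≤ C₂ / min C₃ 1 ^ γ₂ * ((k : ℝ) + 1) ^ (-(γ + γ₁)) :=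
    calc r₂ k ≤ C₂ / min C₃ 1 ^ γ₂ * ((k : ℝ) + 1) ^ (-γ₂) :=
          (hr₂ k).2.trans (div_rpow_le_div_min_rpow_mul_add_one_rpow_neg hC₂.le hC₃
            k.cast_nonneg (by linarith))
      _ ≤ C₂ / min C₃ 1 ^ γ₂ * ((k : ℝ) + 1) ^ (-(γ + γ₁)) := by
          gcongr
          linarith
  obtain ⟨M, hM⟩ := exists_le_mul_add_one_rpow_neg_of_le_one_sub_mul_add
    (by positivity) (by linarith) hγ₁1 hr₁' (fun k => (hr₁ k).2) hr₂' hrec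
  refine squeeze_zero (fun k => by have := hv k; positivity) (fun k => ?_)
    (by simpa using (tendsto_natCast_add_one_rpow_of_neg (p := γ₀ - γ) (by linarith)).const_mul M)
  calc ((k : ℝ) + 1) ^ γ₀ * v k ≤ ((k : ℝ) + 1) ^ γ₀ * (M * ((k : ℝ) + 1) ^ (-γ)) := by
        gcongr; exact hM k
    _ = M * ((k : ℝ) + 1) ^ (γ₀ - γ) := by
        rw [sub_eq_add_neg, rpow_add (by positivity)]; ring

/-- Polynomial decay lemma: if `v^{k+1} ≤ (1 - r₁^k) v^k + r₂^k` with
`C₁/(C₃k+1)^{γ₁} ≤ r₁^k ≤ 1` and `0 ≤ r₂^k ≤ C₂/(C₃k+1)^{γ₂}`, where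
`C₁, C₂, C₃ > 0`, `0 ≤ γ₁ < 1`, `γ₁ < γ₂`, then `(k+1)^{γ₀} v^k → 0` for
every `0 ≤ γ₀ < γ₂ - γ₁`. -/
theorem polynomial_decay
    (v r₁ r₂ : ℕ → ℝ) (C₁ C₂ C₃ γ₁ γ₂ : ℝ)
    (hC₁ : 0 < C₁) (hC₂ : 0 < C₂) (hC₃ : 0 < C₃)
    (hγ₁0 : 0 ≤ γ₁) (hγ₁1 : γ₁ < 1) (hγ₁₂ : γ₁ < γ₂)
    (hv : ∀ k, 0 ≤ v k)
    (hr₁ : ∀ k : ℕ, C₁ / (C₃ * k + 1) ^ γ₁ ≤ r₁ k ∧ r₁ k ≤ 1)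
    (hr₂ : ∀ k : ℕ, 0 ≤ r₂ k ∧ r₂ k ≤ C₂ / (C₃ * k + 1) ^ γ₂)
    (hrec : ∀ k, v (k + 1) ≤ (1 - r₁ k) * v k + r₂ k) :
    ∀ γ₀ : ℝ, 0 ≤ γ₀ → γ₀ < γ₂ - γ₁ →
      Filter.Tendsto (fun k : ℕ => ((k : ℝ) + 1) ^ γ₀ * v k)
        Filter.atTop (nhds 0) :=
  polynomial_decay_general v r₁ r₂ C₁ C₂ C₃ γ₁ γ₂ hC₁ hC₂ hC₃ hγ₁0 hγ₁1 hv hr₁ hr₂ hrec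
end
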